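/- arXiv:1311.0767 — 8 statements merged into one kernel-verified Lean document; each statement's English description precedes it below -/
import Mathlib

section
/- Let m ≥ 1, let K be a symmetric m×m integer matrix and W a skew-symmetric m×m integer matrix such that the rational matrix K − W is invertible, and let t ∈ ℤ^m have greatest common divisor of its entries equal to 1 and satisfy K_{ii} ≡ t_i (mod 2) for every index i. Form the 2m×2m rational block matrix 𝒦 = [[K, W], [Wᵀ, −K]], the charge vector τ = (t, t) ∈ ℤ^{2m}, and the time-reversal vector χ = (0, t) ∈ ℤ^{2m}; then 𝒦 is invertible, and if d is a positive even integer such that the additive subgroup {lᵀ𝒦⁻¹τ : l ∈ ℤ^{2m}} of ℚ equals (1/d)·ℤ, then d·(χᵀ𝒦⁻¹τ) is an even integer. -/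
/-!
Since `𝒦 (u, -u) = ((K - W) u, (K - W) u)`, we get `𝒦⁻¹ τ = (u, -u)` with `u = (K - W)⁻¹ t`,
and `χᵀ 𝒦⁻¹ τ = -tᵀu`. The lattice hypothesis makes `w = d u` an integer vector with
`(K - W) w = d t`. As `W` is skew, `wᵀKw = wᵀ(K - W)w = d tᵀw` is even; on the other hand,
modulo 2 the symmetric form `wᵀKw` only sees the diagonal, `wᵀKw ≡ ∑ Kᵢᵢ wᵢ ≡ tᵀw`.
Hence `d χᵀ 𝒦⁻¹ τ = -tᵀw` is even.
-/

open Matrix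

theorem Finset.sum_sum_eq_sum_diag_of_charTwo {ι R : Type*} [Ring R] [CharP R 2]
    (s : Finset ι) (f : ι → ι → R) (hf : ∀ i j, f i j = f j i) :
    ∑ i ∈ s, ∑ j ∈ s, f i j = ∑ i ∈ s, f i i := by
  classical
  induction s using Finset.induction_on with
  | empty => simp
  | insert a s ha ih =>
    have hcross : ∑ j ∈ s, f a j + ∑ i ∈ s, f i a = 0 := by
      simp only [hf _ a, CharTwo.add_self_eq_zero]
    simp only [Finset.sum_insert ha, Finset.sum_add_distrib, ih]
    rw [add_assoc, ← add_assoc (∑ j ∈ s, f a j), hcross, zero_add]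

namespace Matrix

variable {ι : Type*} [Fintype ι]

theorem dotProduct_mulVec_self_eq_diag_dotProduct {M : Matrix ι ι (ZMod 2)} (hM : M.IsSymm)
    (a : ι → ZMod 2) : a ⬝ᵥ (M *ᵥ a) = M.diag ⬝ᵥ a := by
  have hidem : ∀ x : ZMod 2, x * x = x := by decide
  calc a ⬝ᵥ (M *ᵥ a) = ∑ i, ∑ j, a i * M i j * a j := by
        simp only [dotProduct, mulVec, Finset.mul_sum, mul_assoc]
    _ = ∑ i, a i * M i i * a i :=
        Finset.sum_sum_eq_sum_diag_of_charTwo _ _ fun i j => by rw [hM.apply i j]; ring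
    _ = M.diag ⬝ᵥ a := by
        simp only [dotProduct, diag, mul_comm (a _) (M _ _), mul_assoc, hidem]

theorem dotProduct_mulVec_self_eq_zero_of_transpose_eq_neg {R : Type*} [CommRing R]
    [NoZeroDivisors R] [CharZero R] {W : Matrix ι ι R} (hW : Wᵀ = -W) (w : ι → R) :
    w ⬝ᵥ (W *ᵥ w) = 0 := by
  have h : w ⬝ᵥ (W *ᵥ w) = -(w ⬝ᵥ (W *ᵥ w)) := by
    conv_lhs => rw [dotProduct_mulVec, ← mulVec_transpose, hW, dotProduct_comm]
    rw [neg_mulVec, dotProduct_neg]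
  exact add_self_eq_zero.mp (by linear_combination h)

theorem even_dotProduct_of_sub_mulVec_eq_smul {K W : Matrix ι ι ℤ} (hK : K.IsSymm)
    (hW : Wᵀ = -W) {t w : ι → ℤ} (hpar : ∀ i, K i i ≡ t i [ZMOD 2]) {d : ℤ} (hd : Even d)
    (h : (K - W) *ᵥ w = d • t) : Even (t ⬝ᵥ w) := by
  have hquad : w ⬝ᵥ (K *ᵥ w) = d * (t ⬝ᵥ w) := by
    calc w ⬝ᵥ (K *ᵥ w) = w ⬝ᵥ ((K - W) *ᵥ w) := by
          rw [sub_mulVec, dotProduct_sub, dotProduct_mulVec_self_eq_zero_of_transpose_eq_neg hW,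
            sub_zero]
      _ = d * (t ⬝ᵥ w) := by rw [h, dotProduct_smul, smul_eq_mul, dotProduct_comm]
  have hK2 : (K.map (Int.cast : ℤ → ZMod 2)).IsSymm := hK.map _
  have hdiag : (K.map (Int.cast : ℤ → ZMod 2)).diag = fun i => (t i : ZMod 2) :=
    funext fun i => (ZMod.intCast_eq_intCast_iff _ _ 2).mpr (hpar i)
  have hmod2 : ((w ⬝ᵥ (K *ᵥ w) : ℤ) : ZMod 2) = ((t ⬝ᵥ w : ℤ) : ZMod 2) := by
    have := dotProduct_mulVec_self_eq_diag_dotProduct hK2 (fun i => (w i : ZMod 2))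
    rw [hdiag] at this
    push_cast [dotProduct, mulVec]
    simpa [dotProduct, mulVec] using this
  have hd2 : (d : ZMod 2) = 0 := ZMod.intCast_eq_zero_iff_even.mpr hd
  rw [← ZMod.intCast_eq_zero_iff_even, ← hmod2, hquad, Int.cast_mul, hd2, zero_mul]

theorem det_add_eq_det_sub_of_isSymm [DecidableEq ι] {R : Type*} [CommRing R]
    {K W : Matrix ι ι R} (hK : K.IsSymm) (hW : Wᵀ = -W) : (K + W).det = (K - W).det := by
  rw [← det_transpose (K - W), transpose_sub, hK.eq, hW, sub_neg_eq_add]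

section Blocks

variable {R : Type*}

theorem fromBlocks_mulVec_sumElim_neg [Ring R] (K W : Matrix ι ι R) (u : ι → R) :
    fromBlocks K W (-W) (-K) *ᵥ Sum.elim u (-u) =
      Sum.elim ((K - W) *ᵥ u) ((K - W) *ᵥ u) := by
  rw [fromBlocks_mulVec]
  simp only [Sum.elim_comp_inl, Sum.elim_comp_inr, mulVec_neg, neg_mulVec, sub_mulVec]
  congr 1 <;> abel

theorem isUnit_det_fromBlocks_neg [DecidableEq ι] [Field R] {K W : Matrix ι ι R}
    (hsub : IsUnit (K - W).det) (hadd : IsUnit (K + W).det) :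
    IsUnit (fromBlocks K W (-W) (-K)).det := by
  rw [isUnit_iff_ne_zero, Ne, ← exists_mulVec_eq_zero_iff]
  rintro ⟨v, hv0, hv⟩
  apply hv0
  obtain ⟨x, y, rfl⟩ : ∃ x y : ι → R, v = Sum.elim x y := ⟨_, _, (Sum.elim_comp_inl_inr v).symm⟩
  rw [fromBlocks_mulVec, ← Sum.elim_zero_zero, Sum.elim_eq_iff] at hv
  simp only [Sum.elim_comp_inl, Sum.elim_comp_inr, neg_mulVec] at hv
  obtain ⟨h₁, h₂⟩ := hv
  have hxy : (K - W) *ᵥ (x - y) = (K - W) *ᵥ 0 := by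
    rw [mulVec_zero, sub_mulVec, mulVec_sub, mulVec_sub]
    linear_combination h₁ + h₂
  obtain rfl : x = y :=
    sub_eq_zero.mp (mulVec_injective_of_isUnit ((isUnit_iff_isUnit_det _).mpr hsub) hxy)
  have hx0 : x = 0 := mulVec_injective_of_isUnit ((isUnit_iff_isUnit_det _).mpr hadd)
    (by rw [add_mulVec, h₁, mulVec_zero])
  rw [hx0, Sum.elim_zero_zero]

theorem inv_fromBlocks_neg_mulVec_sumElim [DecidableEq ι] [Field R] {K W : Matrix ι ι R}
    (hsub : IsUnit (K - W).det) (hadd : IsUnit (K + W).det) (t : ι → R) :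
    (fromBlocks K W (-W) (-K))⁻¹ *ᵥ Sum.elim t t =
      Sum.elim ((K - W)⁻¹ *ᵥ t) (-((K - W)⁻¹ *ᵥ t)) := by
  have h := fromBlocks_mulVec_sumElim_neg K W ((K - W)⁻¹ *ᵥ t)
  rw [mulVec_mulVec, mul_nonsing_inv _ hsub, one_mulVec] at h
  rw [← h, mulVec_mulVec, nonsing_inv_mul _ (isUnit_det_fromBlocks_neg hsub hadd), one_mulVec]

end Blocks

theorem mulVec_eq_smul_of_map_intCast_mulVec_eq {A : Matrix ι ι ℤ}
    {u : ι → ℚ} {t w : ι → ℤ} {d : ℤ} (hu : A.map (Int.cast : ℤ → ℚ) *ᵥ u = fun i => (t i : ℚ))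
    (hw : ∀ i, (d : ℚ) * u i = w i) : A *ᵥ w = d • t := by
  have hdu : (fun i => (w i : ℚ)) = (d : ℚ) • u := funext fun i => (hw i).symm
  funext i
  apply Int.cast_injective (α := ℚ)
  calc (((A *ᵥ w) i : ℤ) : ℚ) = (A.map (Int.cast : ℤ → ℚ) *ᵥ ((d : ℚ) • u)) i := by
        rw [← hdu]; exact (Int.castRingHom ℚ).map_mulVec A w i
    _ = (((d • t) i : ℤ) : ℚ) := by simp [mulVec_smul, hu]

theorem exists_int_mul_eq_of_dotProduct_subset [DecidableEq ι]
    {v : ι → ℚ} {d : ℤ} (hd : d ≠ 0)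
    (h : {x : ℚ | ∃ l : ι → ℤ, x = (fun i => (l i : ℚ)) ⬝ᵥ v} ⊆
      {x : ℚ | ∃ n : ℤ, x = (n : ℚ) / (d : ℚ)}) (i : ι) :
    ∃ n : ℤ, (d : ℚ) * v i = n := by
  obtain ⟨n, hn⟩ := h (a := v i) ⟨Pi.single i 1, by simp [dotProduct, Pi.single_apply]⟩
  exact ⟨n, by rw [hn]; field_simp⟩

end Matrix

theorem spinHall_even_charge_even_invariant_general (m : ℕ)
    (K W : Matrix (Fin m) (Fin m) ℤ)
    (hK : K.IsSymm) (hW : Wᵀ = -W)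
    (hKW : IsUnit (((K - W).map (Int.cast : ℤ → ℚ)).det))
    (t : Fin m → ℤ)
    (hpar : ∀ i, K i i ≡ t i [ZMOD 2]) :
    let 𝒦 : Matrix (Fin m ⊕ Fin m) (Fin m ⊕ Fin m) ℚ :=
      Matrix.fromBlocks (K.map (Int.cast : ℤ → ℚ)) (W.map (Int.cast : ℤ → ℚ))
        (Wᵀ.map (Int.cast : ℤ → ℚ)) (-(K.map (Int.cast : ℤ → ℚ)))
    let τ : Fin m ⊕ Fin m → ℚ := Sum.elim (fun i => (t i : ℚ)) (fun i => (t i : ℚ))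
    let χ : Fin m ⊕ Fin m → ℚ := Sum.elim 0 (fun i => (t i : ℚ))
    IsUnit 𝒦.det ∧
      ∀ d : ℤ, 0 < d → Even d →
        {x : ℚ | ∃ l : Fin m ⊕ Fin m → ℤ, x = (fun i => (l i : ℚ)) ⬝ᵥ (𝒦⁻¹ *ᵥ τ)} =
          {x : ℚ | ∃ n : ℤ, x = (n : ℚ) / (d : ℚ)} →
        ∃ k : ℤ, (d : ℚ) * (χ ⬝ᵥ (𝒦⁻¹ *ᵥ τ)) = 2 * (k : ℚ) := by
  intro 𝒦 τ χ
  set K' : Matrix (Fin m) (Fin m) ℚ := K.map Int.cast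
  set W' : Matrix (Fin m) (Fin m) ℚ := W.map Int.cast
  have hW' : W'ᵀ = -W' := by rw [← transpose_map, hW, Matrix.map_neg _ Int.cast_neg]
  have hmap : (K - W).map (Int.cast : ℤ → ℚ) = K' - W' := Matrix.map_sub _ Int.cast_sub K W
  have hsub : IsUnit (K' - W').det := hmap ▸ hKW
  have hadd : IsUnit (K' + W').det := by rwa [det_add_eq_det_sub_of_isSymm (hK.map _) hW']
  have h𝒦 : 𝒦 = fromBlocks K' W' (-W') (-K') := by rw [← hW']; rfl
  set u := (K' - W')⁻¹ *ᵥ fun i => (t i : ℚ)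
  have hsol : 𝒦⁻¹ *ᵥ τ = Sum.elim u (-u) := by
    rw [h𝒦, inv_fromBlocks_neg_mulVec_sumElim hsub hadd]
  refine ⟨h𝒦 ▸ isUnit_det_fromBlocks_neg hsub hadd, fun d hd hdeven hset => ?_⟩
  choose w hw using fun i =>
    exists_int_mul_eq_of_dotProduct_subset hd.ne' hset.subset (Sum.inl i)
  have hdu : ∀ i, (d : ℚ) * u i = w i := fun i => by simpa [hsol] using hw i
  have hw_int : (K - W) *ᵥ w = d • t := mulVec_eq_smul_of_map_intCast_mulVec_eq
    (by rw [hmap, mulVec_mulVec, mul_nonsing_inv _ hsub, one_mulVec]) hdu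
  obtain ⟨c, hc⟩ := even_dotProduct_of_sub_mulVec_eq_smul hK hW hpar hdeven hw_int
  refine ⟨-c, ?_⟩
  calc (d : ℚ) * (χ ⬝ᵥ (𝒦⁻¹ *ᵥ τ)) = -∑ i, (t i : ℚ) * ((d : ℚ) * u i) := by
        rw [hsol, sumElim_dotProduct_sumElim, zero_dotProduct, zero_add, dotProduct_neg,
          mul_neg, dotProduct, Finset.mul_sum]
        ring_nf
    _ = -((t ⬝ᵥ w : ℤ) : ℚ) := by simp [hdu, dotProduct]
    _ = 2 * ((-c : ℤ) : ℚ) := by rw [hc]; push_cast; ring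

/-- (Theorem on Abelian spin Hall insulators.)
Let `K` be a symmetric `m × m` integer matrix, `W` skew-symmetric, with `K - W` invertible
over `ℚ`, and `t ∈ ℤᵐ` with `gcd` of entries `1` and `K i i ≡ t i (mod 2)`.  Form the block
matrix `𝒦 = [[K, W], [Wᵀ, -K]]`, `τ = (t, t)`, `χ = (0, t)`.  Then `𝒦` is invertible, and
if `d` is a positive even integer with `{lᵀ 𝒦⁻¹ τ : l ∈ ℤ^{2m}} = (1/d) ℤ`, then
`d · (χᵀ 𝒦⁻¹ τ)` is an even integer. -/
theorem spinHall_even_charge_even_invariant (m : ℕ) (hm : 1 ≤ m)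
    (K W : Matrix (Fin m) (Fin m) ℤ)
    (hK : K.IsSymm) (hW : Wᵀ = -W)
    (hKW : IsUnit (((K - W).map (Int.cast : ℤ → ℚ)).det))
    (t : Fin m → ℤ)
    (ht : Finset.univ.gcd t = 1)
    (hpar : ∀ i, K i i ≡ t i [ZMOD 2]) :
    let 𝒦 : Matrix (Fin m ⊕ Fin m) (Fin m ⊕ Fin m) ℚ :=
      Matrix.fromBlocks (K.map (Int.cast : ℤ → ℚ)) (W.map (Int.cast : ℤ → ℚ))
        (Wᵀ.map (Int.cast : ℤ → ℚ)) (-(K.map (Int.cast : ℤ → ℚ)))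
    let τ : Fin m ⊕ Fin m → ℚ := Sum.elim (fun i => (t i : ℚ)) (fun i => (t i : ℚ))
    let χ : Fin m ⊕ Fin m → ℚ := Sum.elim 0 (fun i => (t i : ℚ))
    IsUnit 𝒦.det ∧
      ∀ d : ℤ, 0 < d → Even d →
        {x : ℚ | ∃ l : Fin m ⊕ Fin m → ℤ, x = (fun i => (l i : ℚ)) ⬝ᵥ (𝒦⁻¹ *ᵥ τ)} =
          {x : ℚ | ∃ n : ℤ, x = (n : ℚ) / (d : ℚ)} →
        ∃ k : ℤ, (d : ℚ) * (χ ⬝ᵥ (𝒦⁻¹ *ᵥ τ)) = 2 * (k : ℚ) :=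
  spinHall_even_charge_even_invariant_general m K W hK hW hKW t hpar
end

section
/- Let m ≥ 1, let K be a symmetric m×m integer matrix, W a skew-symmetric m×m integer matrix, and t ∈ ℤ^m a vector with K_{ii} ≡ t_i (mod 2) for every index i. If d is an even positive integer and Λ ∈ ℤ^m satisfies (K − W)·Λ = d·t, then the integer tᵀΛ is even. -/
open Matrix

/-! Pairing `(K - W) Λ = d • t` with `Λ` kills the skew part, so `Λᵀ K Λ = d (t ⬝ᵥ Λ)` is even.
Modulo 2 the off-diagonal terms of a symmetric quadratic form cancel in pairs and `Λ i ^ 2 = Λ i`,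
so `Λᵀ K Λ ≡ ∑ i, K i i * Λ i ≡ t ⬝ᵥ Λ`. -/

theorem CharTwo.sum_sum_eq_sum_diag {ι R : Type*} [Fintype ι] [Semiring R] [CharP R 2]
    (f : ι → ι → R) (hf : ∀ i j, f i j = f j i) : ∑ i, ∑ j, f i j = ∑ i, f i i := by
  classical
  have hoff : ∑ p ∈ Finset.univ.offDiag, f p.1 p.2 = 0 :=
    Finset.sum_involution (fun p _ ↦ p.swap)
      (fun p _ ↦ by rw [Prod.fst_swap, Prod.snd_swap, hf p.2, CharTwo.add_self_eq_zero])
      (fun p hp _ h ↦ (Finset.mem_offDiag.1 hp).2.2 (congrArg Prod.fst h).symm)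
      (fun p hp ↦ by simpa [and_comm, eq_comm] using hp)
      (fun p _ ↦ p.swap_swap)
  rw [← Finset.sum_product' Finset.univ Finset.univ, ← Finset.diag_union_offDiag,
    Finset.sum_union (Finset.disjoint_diag_offDiag _), Finset.sum_diag, hoff, add_zero]

theorem Matrix.IsSymm.dotProduct_mulVec_self_eq_sum_diag {ι R : Type*} [Fintype ι]
    [CommSemiring R] [CharP R 2] {A : Matrix ι ι R} (hA : A.IsSymm) (v : ι → R) :
    v ⬝ᵥ A *ᵥ v = ∑ i, A i i * v i ^ 2 := by
  simp only [dotProduct, mulVec, Finset.mul_sum]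
  rw [CharTwo.sum_sum_eq_sum_diag _ fun i j ↦ by rw [hA.apply]; ring]
  exact Finset.sum_congr rfl fun i _ ↦ by ring

theorem Matrix.IsSymm.intCast_dotProduct_mulVec_self_zmod_two {ι : Type*} [Fintype ι]
    {A : Matrix ι ι ℤ} (hA : A.IsSymm) (v : ι → ℤ) :
    ((v ⬝ᵥ A *ᵥ v : ℤ) : ZMod 2) = ∑ i, ((A i i * v i : ℤ) : ZMod 2) := by
  have := (hA.map ((↑) : ℤ → ZMod 2)).dotProduct_mulVec_self_eq_sum_diag ((↑) ∘ v)
  simpa [dotProduct, mulVec, ZMod.pow_card] using this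

theorem Matrix.dotProduct_mulVec_self_eq_zero_of_transpose_eq_neg_s1 {ι R : Type*} [Fintype ι]
    [CommRing R] [IsAddTorsionFree R] {W : Matrix ι ι R} (hW : Wᵀ = -W) (v : ι → R) :
    v ⬝ᵥ W *ᵥ v = 0 := by
  refine self_eq_neg.1 ?_
  calc v ⬝ᵥ W *ᵥ v = Wᵀ *ᵥ v ⬝ᵥ v := by rw [dotProduct_mulVec, mulVec_transpose]
    _ = -(v ⬝ᵥ W *ᵥ v) := by rw [hW, neg_mulVec, neg_dotProduct, dotProduct_comm]

theorem charge_even_of_even_d_general (m : ℕ)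
    (K W : Matrix (Fin m) (Fin m) ℤ)
    (hK : K.IsSymm) (hW : Wᵀ = -W)
    (t : Fin m → ℤ) (hpar : ∀ i, K i i ≡ t i [ZMOD 2])
    (d : ℤ) (hde : Even d)
    (Λ : Fin m → ℤ) (hΛ : (K - W) *ᵥ Λ = d • t) :
    Even (t ⬝ᵥ Λ) := by
  have hself : Λ ⬝ᵥ K *ᵥ Λ = d * (t ⬝ᵥ Λ) := by
    simpa only [sub_mulVec, dotProduct_sub, dotProduct_mulVec_self_eq_zero_of_transpose_eq_neg_s1 hW,
      sub_zero, dotProduct_smul, smul_eq_mul, dotProduct_comm Λ t] using congrArg (Λ ⬝ᵥ ·) hΛ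
  rw [← ZMod.intCast_eq_zero_iff_even]
  calc ((t ⬝ᵥ Λ : ℤ) : ZMod 2) = ∑ i, ((K i i * Λ i : ℤ) : ZMod 2) := by
        simp only [dotProduct, Int.cast_sum]
        exact Finset.sum_congr rfl fun i _ ↦
          ((ZMod.intCast_eq_intCast_iff _ _ 2).2 ((hpar i).mul_right _)).symm
    _ = ((Λ ⬝ᵥ K *ᵥ Λ : ℤ) : ZMod 2) := (hK.intCast_dotProduct_mulVec_self_zmod_two Λ).symm
    _ = 0 := by rw [hself, Int.cast_mul, ZMod.intCast_eq_zero_iff_even.2 hde, zero_mul]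

/-- Let `K` be a symmetric `m × m` integer matrix, `W` skew-symmetric,
and `t` an integer vector with `K i i ≡ t i (mod 2)`. If `d` is an even positive integer
and `Λ` is an integer vector with `(K - W) Λ = d • t`, then `tᵀ Λ` is even. -/
theorem charge_even_of_even_d (m : ℕ) (hm : 1 ≤ m)
    (K W : Matrix (Fin m) (Fin m) ℤ)
    (hK : K.IsSymm) (hW : Wᵀ = -W)
    (t : Fin m → ℤ) (hpar : ∀ i, K i i ≡ t i [ZMOD 2])
    (d : ℤ) (hd : 0 < d) (hde : Even d)
    (Λ : Fin m → ℤ) (hΛ : (K - W) *ᵥ Λ = d • t) :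
    Even (t ⬝ᵥ Λ) :=
  charge_even_of_even_d_general m K W hK hW t hpar d hde Λ hΛ
end

section
/- Let K be a symmetric m×m rational matrix, W a skew-symmetric m×m rational matrix with K − W invertible, and t ∈ ℚ^m. Then the 2m×2m block matrix 𝒦 = [[K, W], [Wᵀ, −K]] is invertible, and with u = (K − W)⁻¹t one has 𝒦·(u, −u) = (t, t). Consequently, for τ = (t, t) and χ = (0, t): (i) {lᵀ𝒦⁻¹τ : l ∈ ℤ^{2m}} = {vᵀ(K − W)⁻¹t : v ∈ ℤ^m} when t ∈ ℤ^m, and (ii) χᵀ𝒦⁻¹τ = −tᵀ(K − W)⁻¹t. -/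
/-!
Adding the upper block row of `𝒦 = [[K, W], [-W, -K]]` to the lower one and the right block
column to the left one makes `𝒦` block triangular with diagonal blocks `K + W = (K - W)ᵀ` and
`W - K`, so `𝒦` is invertible. Since `𝒦 (u, -u) = ((K - W) u, (K - W) u)`, the vector
`𝒦⁻¹ τ` is `(u, -u)`, and pairing any `(a, b)` with it gives `(a - b)ᵀ u`.
-/

open Matrix

namespace Matrix

theorem det_fromBlocks_neg_swap {n R : Type*} [Fintype n] [DecidableEq n] [CommRing R]
    (A B : Matrix n n R) :
    (fromBlocks A B (-B) (-A)).det = (-1) ^ Fintype.card n * (A + B).det * (A - B).det := by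
  have hL : (fromBlocks 1 0 1 1 : Matrix (n ⊕ n) (n ⊕ n) R).det = 1 := by simp
  have hTriangular : fromBlocks 1 0 1 1 * fromBlocks A B (-B) (-A) * fromBlocks 1 0 1 1 =
      fromBlocks (A + B) B 0 (-(A - B)) := by
    simp only [fromBlocks_multiply]
    congr 1 <;> noncomm_ring
  have hdet := congrArg det hTriangular
  rw [det_mul, det_mul, hL, det_fromBlocks_zero₂₁, det_neg] at hdet
  linear_combination hdet

theorem IsSymm.isUnit_det_fromBlocks_transpose {n R : Type*} [Fintype n] [DecidableEq n]
    [CommRing R] {K W : Matrix n n R} (hK : K.IsSymm) (hW : Wᵀ = -W)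
    (hKW : IsUnit (K - W).det) : IsUnit (Matrix.fromBlocks K W Wᵀ (-K)).det := by
  have hKW' : IsUnit (K + W).det := by
    rwa [← sub_neg_eq_add, ← hW, ← hK.eq, ← transpose_sub, det_transpose]
  rw [hW, det_fromBlocks_neg_swap]
  exact ((isUnit_neg_one.pow _).mul hKW').mul hKW

theorem fromBlocks_mulVec_sumElim_neg_s3 {l m R : Type*} [Fintype m] [Ring R]
    (A B C D : Matrix l m R) (u : m → R) :
    fromBlocks A B C D *ᵥ Sum.elim u (-u) = Sum.elim ((A - B) *ᵥ u) ((C - D) *ᵥ u) := by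
  rw [fromBlocks_mulVec, Sum.elim_comp_inl, Sum.elim_comp_inr, mulVec_neg, mulVec_neg,
    sub_mulVec, sub_mulVec, sub_eq_add_neg, sub_eq_add_neg]

theorem sumElim_dotProduct_sumElim_neg {m R : Type*} [Fintype m] [Ring R] (a b u : m → R) :
    Sum.elim a b ⬝ᵥ Sum.elim u (-u) = (a - b) ⬝ᵥ u := by
  rw [sumElim_dotProduct_sumElim, dotProduct_neg, sub_dotProduct, sub_eq_add_neg]

theorem setOf_intCast_dotProduct_sumElim_neg {m R : Type*} [Fintype m] [Ring R] (u : m → R) :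
    {x : R | ∃ l : m ⊕ m → ℤ, x = (fun i => (l i : R)) ⬝ᵥ Sum.elim u (-u)} =
      {x : R | ∃ v : m → ℤ, x = (fun i => (v i : R)) ⬝ᵥ u} := by
  ext x
  constructor
  · rintro ⟨l, rfl⟩
    refine ⟨l ∘ Sum.inl - l ∘ Sum.inr, ?_⟩
    rw [← Sum.elim_comp_inl_inr (fun i => (l i : R)), sumElim_dotProduct_sumElim_neg]
    congr 1
    ext i
    simp
  · rintro ⟨v, rfl⟩
    refine ⟨Sum.elim v 0, ?_⟩
    rw [← Sum.elim_comp_inl_inr (fun i => ((Sum.elim v 0 i : ℤ) : R)),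
      sumElim_dotProduct_sumElim_neg]
    congr 1
    ext i
    simp

end Matrix

theorem spinHall_reduction_general (m : ℕ)
    (K W : Matrix (Fin m) (Fin m) ℚ)
    (hK : K.IsSymm) (hW : Wᵀ = -W)
    (hKW : IsUnit (K - W).det)
    (t : Fin m → ℚ) :
    let 𝒦 : Matrix (Fin m ⊕ Fin m) (Fin m ⊕ Fin m) ℚ := Matrix.fromBlocks K W Wᵀ (-K)
    let τ : Fin m ⊕ Fin m → ℚ := Sum.elim t t
    let χ : Fin m ⊕ Fin m → ℚ := Sum.elim 0 t
    let u : Fin m → ℚ := (K - W)⁻¹ *ᵥ t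
    IsUnit 𝒦.det ∧
    𝒦 *ᵥ (Sum.elim u (-u)) = Sum.elim t t ∧
    ((∀ i, ∃ z : ℤ, t i = (z : ℚ)) →
      {x : ℚ | ∃ l : Fin m ⊕ Fin m → ℤ, x = (fun i => (l i : ℚ)) ⬝ᵥ (𝒦⁻¹ *ᵥ τ)} =
        {x : ℚ | ∃ v : Fin m → ℤ, x = (fun i => (v i : ℚ)) ⬝ᵥ ((K - W)⁻¹ *ᵥ t)}) ∧
    χ ⬝ᵥ (𝒦⁻¹ *ᵥ τ) = -(t ⬝ᵥ ((K - W)⁻¹ *ᵥ t)) := by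
  intro 𝒦 τ χ u
  have hdet : IsUnit 𝒦.det := IsSymm.isUnit_det_fromBlocks_transpose hK hW hKW
  have hsolves : 𝒦 *ᵥ Sum.elim u (-u) = Sum.elim t t := by
    rw [fromBlocks_mulVec_sumElim_neg_s3, hW, neg_sub_neg, mulVec_mulVec, mul_nonsing_inv _ hKW,
      one_mulVec]
  have hinv : 𝒦⁻¹ *ᵥ τ = Sum.elim u (-u) := by
    rw [show τ = Sum.elim t t from rfl, ← hsolves, mulVec_mulVec, nonsing_inv_mul _ hdet, one_mulVec]
  refine ⟨hdet, hsolves, fun _ => ?_, ?_⟩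
  · rw [hinv]
    exact setOf_intCast_dotProduct_sumElim_neg u
  · rw [hinv, sumElim_dotProduct_sumElim_neg, zero_sub, neg_dotProduct]

/-- For `K` symmetric, `W` skew-symmetric rational matrices with `K - W`
invertible, and `t ∈ ℚᵐ`, the block matrix `𝒦 = [[K, W], [Wᵀ, -K]]` is invertible and,
with `u = (K - W)⁻¹ t`, `𝒦 (u, -u) = (t, t)`.  Consequently, for `τ = (t, t)` and
`χ = (0, t)`: (i) `{lᵀ 𝒦⁻¹ τ : l ∈ ℤ^{2m}} = {vᵀ (K - W)⁻¹ t : v ∈ ℤᵐ}` when `t` is an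
integer vector, and (ii) `χᵀ 𝒦⁻¹ τ = - tᵀ (K - W)⁻¹ t`. -/
theorem spinHall_reduction (m : ℕ) (hm : 1 ≤ m)
    (K W : Matrix (Fin m) (Fin m) ℚ)
    (hK : K.IsSymm) (hW : Wᵀ = -W)
    (hKW : IsUnit (K - W).det)
    (t : Fin m → ℚ) :
    let 𝒦 : Matrix (Fin m ⊕ Fin m) (Fin m ⊕ Fin m) ℚ := Matrix.fromBlocks K W Wᵀ (-K)
    let τ : Fin m ⊕ Fin m → ℚ := Sum.elim t t
    let χ : Fin m ⊕ Fin m → ℚ := Sum.elim 0 t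
    let u : Fin m → ℚ := (K - W)⁻¹ *ᵥ t
    IsUnit 𝒦.det ∧
    𝒦 *ᵥ (Sum.elim u (-u)) = Sum.elim t t ∧
    ((∀ i, ∃ z : ℤ, t i = (z : ℚ)) →
      {x : ℚ | ∃ l : Fin m ⊕ Fin m → ℤ, x = (fun i => (l i : ℚ)) ⬝ᵥ (𝒦⁻¹ *ᵥ τ)} =
        {x : ℚ | ∃ v : Fin m → ℤ, x = (fun i => (v i : ℚ)) ⬝ᵥ ((K - W)⁻¹ *ᵥ t)}) ∧
    χ ⬝ᵥ (𝒦⁻¹ *ᵥ τ) = -(t ⬝ᵥ ((K - W)⁻¹ *ᵥ t)) :=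
  spinHall_reduction_general m K W hK hW hKW t
end

section
/- Let N ≥ 1, let K be a symmetric 2N×2N integer matrix with det K ≠ 0, and let Λ_1, …, Λ_N ∈ ℤ^{2N} be linearly independent over ℚ and satisfy the null vector condition Λ_iᵀ K Λ_j = 0 for all i, j. Let Γ = {p ∈ ℤ^{2N} : Λ_iᵀ K p = 0 for all i} and let A be the subgroup of ℤ^{2N} generated by Λ_1, …, Λ_N. Then A ⊆ Γ, the index [Γ : A] is finite, and [Γ : A] equals the greatest common divisor of the absolute values of the N×N minors of the 2N×N integer matrix M whose columns are Λ_1, …, Λ_N. -/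
/-
`Γ` is the kernel of the integer map `p ↦ (Λᵢᵀ K p)ᵢ`, whose image in `ℤ^N` is free, so `Γ`
is a direct summand of `ℤ^{2N}`; it contains the `N` independent `Λᵢ` and, over `ℚ`, lies in
a kernel of dimension `2N - N`, so it has rank `N`. Writing the columns of `M` in a basis `P`
of `Γ` gives `M = P C` with `C` a square integer matrix, and `[Γ : A] = |det C|`. The maximal
minors of `M` are `det C` times those of `P`, and the minors of `P` are coprime by
Cauchy–Binet because a retraction onto `Γ` gives `P` an integer left inverse.
-/

open Matrix

/-- The lattice `Γ` of low-energy sectors: integer vectors `p` with `Λᵢᵀ K p = 0` for all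
gapping vectors `Λᵢ`. -/
def sectorLattice {n κ : Type*} [Fintype n] (K : Matrix n n ℤ) (Λ : κ → n → ℤ) :
    AddSubgroup (n → ℤ) where
  carrier := {p | ∀ i, Λ i ⬝ᵥ (K *ᵥ p) = 0}
  zero_mem' := by
    intro i
    simp [Matrix.mulVec_zero]
  add_mem' := by
    intro a b ha hb i
    rw [Matrix.mulVec_add, dotProduct_add, ha i, hb i, add_zero]
  neg_mem' := by
    intro a ha i
    rw [Matrix.mulVec_neg, dotProduct_neg, ha i, neg_zero]

/-- The greatest common divisor of the absolute values of the maximal minors of an integer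
matrix `M`, i.e. of the determinants of the square submatrices obtained by selecting rows
of `M` via an embedding of the column index type into the row index type. -/
noncomputable def minorGcd {R C : Type*} [Fintype R] [Fintype C] [DecidableEq R]
    [DecidableEq C] (M : Matrix R C ℤ) : ℕ :=
  Finset.univ.gcd fun f : C ↪ R => ((M.submatrix f id).det).natAbs

open Module

theorem linearIndependent_intCast_iff {ι n : Type*} (v : ι → n → ℤ) :
    LinearIndependent ℚ (fun i j => (v i j : ℚ)) ↔ LinearIndependent ℤ v := by
  rw [← LinearIndependent.iff_fractionRing ℤ ℚ]
  exact LinearMap.linearIndependent_iff ((Algebra.linearMap ℤ ℚ).compLeft n)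
    (LinearMap.ker_eq_bot.mpr fun x y h => funext fun j => Int.cast_injective (congrFun h j))

namespace Matrix

theorem det_mul_eq_sum_det_submatrix_mul_prod {R m n : Type*} [CommRing R] [Fintype m]
    [Fintype n] [DecidableEq n] (A : Matrix n m R) (B : Matrix m n R) :
    (A * B).det = ∑ g : n → m, (A.submatrix id g).det * ∏ i, B (g i) i := by
  have expand : ∀ σ : Equiv.Perm n,
      ∏ i, ∑ j, A (σ i) j * B j i = ∑ g : n → m, ∏ i, A (σ i) (g i) * B (g i) i := by
    intro σ
    rw [Finset.prod_univ_sum, Fintype.piFinset_univ]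
  simp only [det_apply, mul_apply, expand, Finset.smul_sum]
  rw [Finset.sum_comm]
  refine Finset.sum_congr rfl fun g _ => ?_
  rw [Finset.sum_mul]
  refine Finset.sum_congr rfl fun σ _ => ?_
  rw [Finset.prod_mul_distrib, smul_mul_assoc]
  rfl

theorem dvd_det_mul_of_forall_dvd_det_submatrix {R m n : Type*} [CommRing R] [Fintype m]
    [Fintype n] [DecidableEq n] (A : Matrix n m R) (B : Matrix m n R) {d : R}
    (h : ∀ g : n ↪ m, d ∣ (A.submatrix id g).det) : d ∣ (A * B).det := by
  rw [det_mul_eq_sum_det_submatrix_mul_prod]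
  refine Finset.dvd_sum fun g _ => ?_
  by_cases hg : Function.Injective g
  · exact dvd_mul_of_dvd_left (h ⟨g, hg⟩) _
  · obtain ⟨i, j, hij, hne⟩ := Function.not_injective_iff.mp hg
    rw [det_zero_of_column_eq hne fun k => by simp [hij], zero_mul]
    exact dvd_zero d

theorem det_ne_zero_of_linearIndependent_col_mul {R m n : Type*} [CommRing R] [IsDomain R]
    [Fintype n] [DecidableEq n] (P : Matrix m n R) (C : Matrix n n R)
    (h : LinearIndependent R (P * C).col) : C.det ≠ 0 := by
  have hcol : (P * C).col = P.mulVecLin ∘ C.col := by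
    ext j i
    simp [col_apply, mul_apply, mulVec, dotProduct]
  rw [hcol] at h
  exact nonsingular_iff_det_ne_zero.mp (.of_linearIndependent_col h.of_comp)

theorem finrank_ker_mul_mulVecLin_add_card {F m n : Type*} [Field F] [Fintype m] [Fintype n]
    [DecidableEq n] {A : Matrix m n F} (hA : LinearIndependent F A.row) {B : Matrix n n F}
    (hB : B.det ≠ 0) :
    finrank F (LinearMap.ker (A * B).mulVecLin) + Fintype.card m = Fintype.card n := by
  have hrank : (A * B).rank = Fintype.card m := by
    rw [rank_mul_eq_left_of_isUnit_det B A (isUnit_iff_ne_zero.mpr hB), hA.rank_matrix]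
  rw [← hrank, ← finrank_fintype_fun_eq_card F (η := n),
    ← LinearMap.finrank_range_add_finrank_ker (A * B).mulVecLin, add_comm]
  rfl

theorem finrank_ker_mulVecLin_le_finrank_ker_map_intCast {m n : Type*} [Fintype n]
    (B : Matrix m n ℤ) :
    finrank ℤ (LinearMap.ker B.mulVecLin) ≤
      finrank ℚ (LinearMap.ker (B.map (Int.castRingHom ℚ)).mulVecLin) := by
  let b := finBasis ℤ (LinearMap.ker B.mulVecLin)
  let w : Fin _ → n → ℚ := fun i j => ((b i : n → ℤ) j : ℚ)
  have hw : LinearIndependent ℚ w := (linearIndependent_intCast_iff fun i => (b i : n → ℤ)).mpr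
    (b.linearIndependent.map' (LinearMap.ker B.mulVecLin).subtype (Submodule.ker_subtype _))
  have hmem : ∀ i, w i ∈ LinearMap.ker (B.map (Int.castRingHom ℚ)).mulVecLin := by
    intro i
    have hker : B *ᵥ (b i : n → ℤ) = 0 := (b i).2
    ext r
    exact ((Int.castRingHom ℚ).map_mulVec B (b i) r).symm.trans (by simp [hker])
  have hw' : LinearIndependent ℚ fun i => (⟨w i, hmem i⟩ : LinearMap.ker _) :=
    .of_comp (LinearMap.ker _).subtype hw
  simpa using hw'.fintype_card_le_finrank

end Matrix

theorem LinearMap.exists_retraction_ker {R M N : Type*} [Ring R] [AddCommGroup M] [Module R M]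
    [AddCommGroup N] [Module R N] (φ : M →ₗ[R] N) [Projective R (LinearMap.range φ)] :
    ∃ π : M →ₗ[R] LinearMap.ker φ, π ∘ₗ (LinearMap.ker φ).subtype = LinearMap.id := by
  obtain ⟨g, hg⟩ := φ.rangeRestrict.exists_rightInverse_of_surjective φ.range_rangeRestrict
  have hφg : ∀ y, φ (g y) = y := fun y => congrArg Subtype.val (LinearMap.congr_fun hg y)
  refine ⟨(LinearMap.id - g ∘ₗ φ.rangeRestrict).codRestrict (LinearMap.ker φ) fun x => ?_, ?_⟩
  · ext ⟨x, hx⟩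
    have hx' : φ.rangeRestrict x = 0 := Subtype.ext (LinearMap.mem_ker.mp hx)
    simp [hx']
  · simp [hφg]

theorem Module.Basis.of_coe_eq_mul_toMatrix {R m n k : Type*} [CommSemiring R] [Fintype n]
    {S : Submodule R (m → R)} (b : Basis n R S) (v : k → S) :
    (Matrix.of fun r j => (v j : m → R) r) =
      (Matrix.of fun r i => (b i : m → R) r) * b.toMatrix v := by
  ext r j
  have h := congrArg (fun x : S => (x : m → R) r) (b.sum_repr (v j))
  simp only [Submodule.coe_sum, Submodule.coe_smul, Finset.sum_apply, Pi.smul_apply,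
    smul_eq_mul] at h
  simp [Matrix.mul_apply, Basis.toMatrix_apply, ← h, mul_comm]

section minorGcd

variable {m n : Type*} [Fintype m] [Fintype n] [DecidableEq m] [DecidableEq n]

theorem minorGcd_mul (P : Matrix m n ℤ) (C : Matrix n n ℤ) :
    minorGcd (P * C) = C.det.natAbs * minorGcd P := by
  have hminor : ∀ g : n ↪ m, ((P * C).submatrix g id).det.natAbs =
      C.det.natAbs * (P.submatrix g id).det.natAbs := by
    intro g
    rw [submatrix_mul P C g id id Function.bijective_id, submatrix_id_id, det_mul,
      Int.natAbs_mul, mul_comm]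
  rw [minorGcd, Finset.gcd_congr rfl fun g _ => hminor g, Finset.gcd_mul_left, normalize_eq]
  rfl

theorem minorGcd_eq_one_of_mul_eq_one {P : Matrix m n ℤ} {L : Matrix n m ℤ} (h : L * P = 1) :
    minorGcd P = 1 := by
  have hdvd : (minorGcd P : ℤ) ∣ (Pᵀ * Lᵀ).det := by
    refine dvd_det_mul_of_forall_dvd_det_submatrix _ _ fun g => ?_
    rw [← transpose_submatrix, det_transpose, Int.natCast_dvd]
    exact Finset.gcd_dvd (Finset.mem_univ g)
  rw [← transpose_mul, h, transpose_one, det_one] at hdvd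
  exact Nat.dvd_one.mp (by exact_mod_cast hdvd)

theorem minorGcd_basis_eq_one {S : Submodule ℤ (m → ℤ)} (b : Basis n ℤ S)
    {π : (m → ℤ) →ₗ[ℤ] S} (hπ : π ∘ₗ S.subtype = LinearMap.id) :
    minorGcd (Matrix.of fun r i => (b i : m → ℤ) r) = 1 := by
  refine minorGcd_eq_one_of_mul_eq_one
    (L := LinearMap.toMatrix' (b.equivFun.toLinearMap ∘ₗ π)) ?_
  ext i j
  have hb : π (b j) = b j := LinearMap.congr_fun hπ (b j)
  change (LinearMap.toMatrix' _ *ᵥ (b j : m → ℤ)) i = _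
  simp [LinearMap.toMatrix'_mulVec, hb, one_apply, eq_comm]

end minorGcd

section sectorLattice

variable {n κ : Type*} [Fintype n] (K : Matrix n n ℤ) (Λ : κ → n → ℤ)

theorem sectorLattice_toIntSubmodule :
    (sectorLattice K Λ).toIntSubmodule = LinearMap.ker (Matrix.of Λ * K).mulVecLin := by
  ext p
  rw [LinearMap.mem_ker, mulVecLin_apply, ← mulVec_mulVec, funext_iff]
  exact Iff.rfl

theorem closure_range_le_sectorLattice (hnull : ∀ i j, Λ i ⬝ᵥ (K *ᵥ Λ j) = 0) :
    AddSubgroup.closure (Set.range Λ) ≤ sectorLattice K Λ :=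
  (AddSubgroup.closure_le _).mpr (Set.range_subset_iff.mpr fun j i => hnull i j)

theorem exists_retraction_sectorLattice [Finite κ] :
    ∃ π : (n → ℤ) →ₗ[ℤ] (sectorLattice K Λ).toIntSubmodule,
      π ∘ₗ (sectorLattice K Λ).toIntSubmodule.subtype = LinearMap.id := by
  rw [sectorLattice_toIntSubmodule]
  exact LinearMap.exists_retraction_ker _

theorem card_le_finrank_sectorLattice [Fintype κ] (hnull : ∀ i j, Λ i ⬝ᵥ (K *ᵥ Λ j) = 0)
    (hΛ : LinearIndependent ℤ Λ) :
    Fintype.card κ ≤ finrank ℤ (sectorLattice K Λ).toIntSubmodule :=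
  have hmem : ∀ j, Λ j ∈ sectorLattice K Λ := fun j i => hnull i j
  (LinearIndependent.of_comp (sectorLattice K Λ).toIntSubmodule.subtype
    (v := fun j => (⟨Λ j, hmem j⟩ : (sectorLattice K Λ).toIntSubmodule)) hΛ)
    |>.fintype_card_le_finrank

theorem finrank_sectorLattice_add_card_le [Fintype κ] [DecidableEq n] (hdet : K.det ≠ 0)
    (hind : LinearIndependent ℚ fun i j => (Λ i j : ℚ)) :
    finrank ℤ (sectorLattice K Λ).toIntSubmodule + Fintype.card κ ≤ Fintype.card n := by
  have hdetℚ : (K.map (Int.castRingHom ℚ)).det ≠ 0 := by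
    rw [Int.coe_castRingHom, ← Int.cast_det]
    exact_mod_cast hdet
  rw [sectorLattice_toIntSubmodule]
  calc _ ≤ finrank ℚ (LinearMap.ker ((Matrix.of Λ * K).map (Int.castRingHom ℚ)).mulVecLin)
        + Fintype.card κ := by grw [finrank_ker_mulVecLin_le_finrank_ker_map_intCast]
    _ = Fintype.card n := by
      rw [Matrix.map_mul]
      exact finrank_ker_mul_mulVecLin_add_card hind hdetℚ

end sectorLattice

theorem disk_ground_state_degeneracy_general (N : ℕ)
    (K : Matrix (Fin (2 * N)) (Fin (2 * N)) ℤ) (hdet : K.det ≠ 0)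
    (Λ : Fin N → Fin (2 * N) → ℤ)
    (hind : LinearIndependent ℚ (fun i => fun j => (Λ i j : ℚ)))
    (hnull : ∀ i j, Λ i ⬝ᵥ (K *ᵥ Λ j) = 0) :
    AddSubgroup.closure (Set.range Λ) ≤ sectorLattice K Λ ∧
    (AddSubgroup.closure (Set.range Λ)).relIndex (sectorLattice K Λ) ≠ 0 ∧
    (AddSubgroup.closure (Set.range Λ)).relIndex (sectorLattice K Λ) =
      minorGcd (Matrix.of fun r c => Λ c r) := by
  have hΛ : LinearIndependent ℤ Λ := (linearIndependent_intCast_iff Λ).mp hind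
  have hrank : finrank ℤ (sectorLattice K Λ).toIntSubmodule = N := by
    have hlower := card_le_finrank_sectorLattice K Λ hnull hΛ
    have hupper := finrank_sectorLattice_add_card_le K Λ hdet hind
    simp only [Fintype.card_fin] at hlower hupper
    omega
  set A := AddSubgroup.closure (Set.range Λ)
  set Γ := sectorLattice K Λ
  have hAΓ : A ≤ Γ := closure_range_le_sectorLattice K Λ hnull
  let bΓ := finBasisOfFinrankEq ℤ _ hrank
  let bA : Basis (Fin N) ℤ A.toIntSubmodule :=
    (Basis.span hΛ).map (LinearEquiv.ofEq _ _ (AddSubgroup.toIntSubmodule_closure _).symm)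
  set C := bΓ.toMatrix fun j => ⟨bA j, hAΓ (bA j).2⟩
  have hM : (Matrix.of fun r c => Λ c r) = (Matrix.of fun r i => (bΓ i : _ → ℤ) r) * C := by
    rw [← bΓ.of_coe_eq_mul_toMatrix]
    simp [bA, Basis.span_apply]
  have hindex : A.relIndex Γ = C.det.natAbs := by
    rw [AddSubgroup.relIndex_eq_natAbs_det A Γ hAΓ bA bΓ, Basis.det_apply]
  have hC : C.det ≠ 0 := det_ne_zero_of_linearIndependent_col_mul _ C (by rw [← hM]; exact hΛ)
  obtain ⟨π, hπ⟩ := exists_retraction_sectorLattice K Λ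
  refine ⟨hAΓ, hindex ▸ Int.natAbs_ne_zero.mpr hC, ?_⟩
  rw [hindex, hM, minorGcd_mul, minorGcd_basis_eq_one bΓ hπ, mul_one]

/-- (Ground state degeneracy of a gapped edge on a disk.) Let `K` be a
symmetric nonsingular `2N × 2N` integer matrix and `Λ₁, …, Λ_N ∈ ℤ^{2N}` linearly
independent over `ℚ`, satisfying the null vector condition `Λᵢᵀ K Λⱼ = 0`.  With
`Γ = {p ∈ ℤ^{2N} : Λᵢᵀ K p = 0 ∀ i}` and `A` the subgroup generated by the `Λᵢ`, one has
`A ⊆ Γ`, the index `[Γ : A]` is finite, and it equals the gcd of the absolute values of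
the `N × N` minors of the matrix with columns `Λ₁, …, Λ_N`. -/
theorem disk_ground_state_degeneracy (N : ℕ) (hN : 1 ≤ N)
    (K : Matrix (Fin (2 * N)) (Fin (2 * N)) ℤ) (hK : K.IsSymm) (hdet : K.det ≠ 0)
    (Λ : Fin N → Fin (2 * N) → ℤ)
    (hind : LinearIndependent ℚ (fun i => fun j => (Λ i j : ℚ)))
    (hnull : ∀ i j, Λ i ⬝ᵥ (K *ᵥ Λ j) = 0) :
    AddSubgroup.closure (Set.range Λ) ≤ sectorLattice K Λ ∧
    (AddSubgroup.closure (Set.range Λ)).relIndex (sectorLattice K Λ) ≠ 0 ∧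
    (AddSubgroup.closure (Set.range Λ)).relIndex (sectorLattice K Λ) =
      minorGcd (Matrix.of fun r c => Λ c r) :=
  disk_ground_state_degeneracy_general N K hdet Λ hind hnull
end

section
/- Let N ≥ 1, let K be a symmetric 2N×2N integer matrix with det K ≠ 0, and let {Λ_{a,1}, …, Λ_{a,N}} and {Λ_{b,1}, …, Λ_{b,N}} be two families of vectors in ℤ^{2N}, each linearly independent over ℚ, satisfying Λ_{a,i}ᵀ K Λ_{a,j} = 0 and Λ_{b,i}ᵀ K Λ_{b,j} = 0 for all i, j. Define the 4N×4N integer matrix K′ = [[0, I], [I, −K]] (N.B. 2N×2N blocks) and the 2N vectors Λ′_i = (K Λ_{a,i}, Λ_{a,i}) for 1 ≤ i ≤ N and Λ′_{N+j} = (0, Λ_{b,j}) for 1 ≤ j ≤ N in ℤ^{4N}. Then K′ is symmetric with determinant ±1, the vectors Λ′_1, …, Λ′_{2N} are linearly independent over ℚ, and Λ′_iᵀ K′ Λ′_j = 0 for all 1 ≤ i, j ≤ 2N. -/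
open Matrix

/-!
`K' = [[0, I], [I, -K]]` has inverse `[[K, I], [I, 0]]`, so it is a symmetric unimodular matrix.
Since `(u, x) ⬝ᵥ K' (v, y) = u ⬝ᵥ y + x ⬝ᵥ v - x ⬝ᵥ K y`, the symmetry of `K` makes every
pairing of the new vectors either cancel or reduce to one of the two original null conditions.
The vectors `Λ'` are the image of the family `(Λ_a, 0), (0, Λ_b)` under the map
`(p, q) ↦ (K p, p + q)`, which is injective because `det K ≠ 0`; hence they are linearly
independent.
-/

theorem Matrix.IsSymm.mulVec_dotProduct {n R : Type*} [Fintype n] [CommRing R]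
    {K : Matrix n n R} (hK : K.IsSymm) (x y : n → R) : K *ᵥ x ⬝ᵥ y = x ⬝ᵥ (K *ᵥ y) := by
  rw [dotProduct_mulVec, ← mulVec_transpose, hK.eq, dotProduct_comm]

theorem Matrix.isSymm_fromBlocks_zero_one_one_neg {n R : Type*} [DecidableEq n] [Ring R]
    {K : Matrix n n R} (hK : K.IsSymm) :
    (fromBlocks 0 1 1 (-K) : Matrix (n ⊕ n) (n ⊕ n) R).IsSymm := by
  simp [IsSymm, fromBlocks_transpose, hK.eq]

section Blocks

variable {n R : Type*} [Fintype n] [DecidableEq n]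

theorem Matrix.fromBlocks_zero_one_one_mul_fromBlocks_neg_one_one_zero [Ring R]
    (A : Matrix n n R) :
    (fromBlocks 0 1 1 A : Matrix (n ⊕ n) (n ⊕ n) R) * fromBlocks (-A) 1 1 0 = 1 := by
  simp [fromBlocks_multiply, fromBlocks_one]

theorem Matrix.isUnit_det_fromBlocks_zero_one_one [CommRing R] (A : Matrix n n R) :
    IsUnit (fromBlocks 0 1 1 A : Matrix (n ⊕ n) (n ⊕ n) R).det :=
  IsUnit.of_mul_eq_one _ <| by
    rw [← det_mul, fromBlocks_zero_one_one_mul_fromBlocks_neg_one_one_zero, det_one]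

theorem Matrix.sumElim_dotProduct_fromBlocks_zero_one_one_neg_mulVec [CommRing R]
    (K : Matrix n n R) (u x v y : n → R) :
    Sum.elim u x ⬝ᵥ (fromBlocks 0 1 1 (-K) *ᵥ Sum.elim v y) =
      u ⬝ᵥ y + x ⬝ᵥ v - x ⬝ᵥ (K *ᵥ y) := by
  simp [fromBlocks_mulVec, sumElim_dotProduct_sumElim, neg_mulVec, sub_eq_add_neg, add_assoc]

theorem Matrix.IsSymm.sumElim_dotProduct_fromBlocks_zero_one_one_neg_mulVec_eq_zero [CommRing R]
    {ι κ : Type*} {K : Matrix n n R} (hK : K.IsSymm) {a : ι → n → R} {b : κ → n → R}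
    (ha : ∀ i j, a i ⬝ᵥ (K *ᵥ a j) = 0) (hb : ∀ i j, b i ⬝ᵥ (K *ᵥ b j) = 0) :
    let Λ : ι ⊕ κ → n ⊕ n → R :=
      Sum.elim (fun i => Sum.elim (K *ᵥ a i) (a i)) (fun j => Sum.elim 0 (b j))
    ∀ x y, Λ x ⬝ᵥ (Matrix.fromBlocks 0 1 1 (-K) *ᵥ Λ y) = 0 := by
  rintro Λ (i | i) (j | j) <;>
    simp [Λ, sumElim_dotProduct_fromBlocks_zero_one_one_neg_mulVec, hK.mulVec_dotProduct, ha, hb]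

end Blocks

section Independence

variable {R : Type*} [Ring R] {ι κ : Type*}

theorem LinearIndependent.sumElim_graph {M M' : Type*} [AddCommGroup M] [Module R M]
    [AddCommGroup M'] [Module R M'] {A : M →ₗ[R] M'} (hA : Function.Injective A) {f : ι → M}
    {g : κ → M} (hf : LinearIndependent R f) (hg : LinearIndependent R g) :
    LinearIndependent R (Sum.elim (fun i => (A (f i), f i)) (fun j => ((0 : M'), g j))) := by
  let Φ : M × M →ₗ[R] M' × M :=
    (A ∘ₗ LinearMap.fst R M M).prod (LinearMap.fst R M M + LinearMap.snd R M M)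
  have hΦ : LinearMap.ker Φ = ⊥ := LinearMap.ker_eq_bot'.mpr fun x hx => by
    have hx₁ : x.1 = 0 := hA ((congrArg Prod.fst hx).trans A.map_zero.symm)
    have hx₂ : x.1 + x.2 = 0 := congrArg Prod.snd hx
    rw [hx₁, zero_add] at hx₂
    exact Prod.ext hx₁ hx₂
  have h := (linearIndependent_inl_union_inr' hf hg).map' Φ hΦ
  have hΦ_comp : Φ ∘ Sum.elim (LinearMap.inl R M M ∘ f) (LinearMap.inr R M M ∘ g) =
      Sum.elim (fun i => (A (f i), f i)) (fun j => ((0 : M'), g j)) := by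
    ext (i | j) <;> simp [Φ]
  rwa [hΦ_comp] at h

theorem LinearIndependent.sumElim_sumElim_graph {m m' : Type*}
    {A : (m → R) →ₗ[R] (m' → R)} (hA : Function.Injective A) {f : ι → m → R} {g : κ → m → R}
    (hf : LinearIndependent R f) (hg : LinearIndependent R g) :
    LinearIndependent R
      (Sum.elim (fun i => Sum.elim (A (f i)) (f i)) (fun j => Sum.elim 0 (g j))) := by
  let e := (LinearEquiv.sumArrowLequivProdArrow m' m R R).symm
  have h := (hf.sumElim_graph hA hg).map' e.toLinearMap e.ker
  have he_comp :
      e.toLinearMap ∘ Sum.elim (fun i => (A (f i), f i)) (fun j => ((0 : m' → R), g j)) =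
      Sum.elim (fun i => Sum.elim (A (f i)) (f i)) (fun j => Sum.elim 0 (g j)) := by
    ext (i | j) (k | k) <;> rfl
  rwa [he_comp] at h

end Independence

theorem cylinder_change_of_variables_general (N : ℕ)
    (K : Matrix (Fin (2 * N)) (Fin (2 * N)) ℤ) (hK : K.IsSymm) (hdet : K.det ≠ 0)
    (Λa Λb : Fin N → Fin (2 * N) → ℤ)
    (hinda : LinearIndependent ℚ (fun i => fun j => (Λa i j : ℚ)))
    (hindb : LinearIndependent ℚ (fun i => fun j => (Λb i j : ℚ)))
    (hnulla : ∀ i j, Λa i ⬝ᵥ (K *ᵥ Λa j) = 0)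
    (hnullb : ∀ i j, Λb i ⬝ᵥ (K *ᵥ Λb j) = 0) :
    let K' : Matrix (Fin (2 * N) ⊕ Fin (2 * N)) (Fin (2 * N) ⊕ Fin (2 * N)) ℤ :=
      Matrix.fromBlocks 0 1 1 (-K)
    let Λ' : Fin N ⊕ Fin N → Fin (2 * N) ⊕ Fin (2 * N) → ℤ :=
      Sum.elim (fun i => Sum.elim (K *ᵥ Λa i) (Λa i)) (fun j => Sum.elim 0 (Λb j))
    K'.IsSymm ∧ (K'.det = 1 ∨ K'.det = -1) ∧
    LinearIndependent ℚ (fun i => fun j => (Λ' i j : ℚ)) ∧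
    (∀ i j, Λ' i ⬝ᵥ (K' *ᵥ Λ' j) = 0) := by
  intro K' Λ'
  refine ⟨isSymm_fromBlocks_zero_one_one_neg hK,
    Int.isUnit_iff.mp (isUnit_det_fromBlocks_zero_one_one _), ?_,
    hK.sumElim_dotProduct_fromBlocks_zero_one_one_neg_mulVec_eq_zero hnulla hnullb⟩
  let Kq : Matrix (Fin (2 * N)) (Fin (2 * N)) ℚ := K.map (↑)
  have hKq : Function.Injective Kq.mulVecLin :=
    mulVec_injective_of_det_ne_zero (by rwa [← Int.cast_det, Int.cast_ne_zero])
  have hcast : (fun i j => (Λ' i j : ℚ)) =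
      Sum.elim (fun i => Sum.elim (Kq *ᵥ fun j => (Λa i j : ℚ)) fun j => (Λa i j : ℚ))
        (fun i => Sum.elim 0 fun j => (Λb i j : ℚ)) := by
    ext (i | i) (k | k)
    · exact RingHom.map_mulVec (Int.castRingHom ℚ) K (Λa i) k
    all_goals simp [Λ']
  rw [hcast]
  exact hinda.sumElim_sumElim_graph hKq hindb

/-- (Cylinder-to-disk change of variables.)  Let `K` be a symmetric
nonsingular `2N × 2N` integer matrix and let `Λ_{a,i}`, `Λ_{b,i}` (`1 ≤ i ≤ N`) be two
families of integer vectors, each linearly independent over `ℚ` and each satisfying the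
null vector condition with respect to `K`.  Then the `4N × 4N` matrix
`K' = [[0, I], [I, -K]]` is symmetric with determinant `±1`, the `2N` vectors
`Λ'ᵢ = (K Λ_{a,i}, Λ_{a,i})` and `Λ'_{N+j} = (0, Λ_{b,j})` are linearly independent over
`ℚ`, and they satisfy the null vector condition with respect to `K'`. -/
theorem cylinder_change_of_variables (N : ℕ) (hN : 1 ≤ N)
    (K : Matrix (Fin (2 * N)) (Fin (2 * N)) ℤ) (hK : K.IsSymm) (hdet : K.det ≠ 0)
    (Λa Λb : Fin N → Fin (2 * N) → ℤ)
    (hinda : LinearIndependent ℚ (fun i => fun j => (Λa i j : ℚ)))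
    (hindb : LinearIndependent ℚ (fun i => fun j => (Λb i j : ℚ)))
    (hnulla : ∀ i j, Λa i ⬝ᵥ (K *ᵥ Λa j) = 0)
    (hnullb : ∀ i j, Λb i ⬝ᵥ (K *ᵥ Λb j) = 0) :
    let K' : Matrix (Fin (2 * N) ⊕ Fin (2 * N)) (Fin (2 * N) ⊕ Fin (2 * N)) ℤ :=
      Matrix.fromBlocks 0 1 1 (-K)
    let Λ' : Fin N ⊕ Fin N → Fin (2 * N) ⊕ Fin (2 * N) → ℤ :=
      Sum.elim (fun i => Sum.elim (K *ᵥ Λa i) (Λa i)) (fun j => Sum.elim 0 (Λb j))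
    K'.IsSymm ∧ (K'.det = 1 ∨ K'.det = -1) ∧
    LinearIndependent ℚ (fun i => fun j => (Λ' i j : ℚ)) ∧
    (∀ i j, Λ' i ⬝ᵥ (K' *ᵥ Λ' j) = 0) :=
  cylinder_change_of_variables_general N K hK hdet Λa Λb hinda hindb hnulla hnullb
end

section
/- Let N ≥ 1, let K be a symmetric 2N×2N integer matrix with det K ≠ 0, and let {Λ_{a,1}, …, Λ_{a,N}} and {Λ_{b,1}, …, Λ_{b,N}} be two families of vectors in ℤ^{2N}, each linearly independent over ℚ, satisfying Λ_{a,i}ᵀ K Λ_{a,j} = 0 and Λ_{b,i}ᵀ K Λ_{b,j} = 0 for all i, j. Set K′ = [[0, I], [I, −K]] (2N×2N blocks), Λ′_i = (K Λ_{a,i}, Λ_{a,i}) for 1 ≤ i ≤ N and Λ′_{N+j} = (0, Λ_{b,j}) for 1 ≤ j ≤ N, let Γ′ = {p ∈ ℤ^{4N} : Λ′_iᵀ K′ p = 0 for all i} and let A′ be the subgroup of ℤ^{4N} generated by Λ′_1, …, Λ′_{2N}. Then A′ ⊆ Γ′ and the index [Γ′ : A′] is finite and equals the greatest common divisor of the absolute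 values of the 2N×2N minors of the 4N×2N matrix M′ whose columns are (KΛ_{a,1}, Λ_{a,1}), …, (KΛ_{a,N}, Λ_{a,N}), (0, Λ_{b,1}), …, (0, Λ_{b,N}). -/
/-
Over `ℚ`, the gapping vectors `Λ'ᵢ` are `K'`-null, independent and half as many as the
coordinates, so they span a Lagrangian subspace; as `K' = [[0, I], [I, -K]]` is nondegenerate,
`Γ'` is exactly the set of integer points of that subspace, the saturation of `A'`.
Writing the `Λ'ᵢ` in a basis of `Γ'` gives `M' = E Y` with `[Γ' : A'] = |det Y|`, and each
maximal minor of `M'` is the corresponding minor of `E` times `det Y`. The minors of `E` are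
coprime: a dependency of the columns of `E` modulo a prime `p` lifts to a vector of `Γ'`
divisible by `p`; by saturation its quotient by `p` lies in `Γ'`, so the coefficients of the
dependency vanish modulo `p`.
-/

open Matrix

section Minors

variable {n κ : Type*} [Fintype n] [Fintype κ]

theorem Matrix.exists_det_submatrix_ne_zero {F : Type*} [Field F] [DecidableEq κ]
    (E : Matrix n κ F) (h : LinearIndependent F E.col) :
    ∃ f : κ ↪ n, (E.submatrix f id).det ≠ 0 := by
  obtain ⟨s, a, ha, hspan, hind⟩ := exists_linearIndependent' F E.row
  have : Finite s := Finite.of_injective a ha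
  have : Fintype s := Fintype.ofFinite s
  have hcard : Fintype.card κ = Fintype.card s := by
    rw [← finrank_span_eq_card h, ← finrank_span_eq_card hind, hspan, ← rank_eq_finrank_span_row,
      ← rank_transpose, rank_eq_finrank_span_row, row_transpose]
  let e : κ ≃ s := Fintype.equivOfCardEq hcard
  refine ⟨e.toEmbedding.trans ⟨a, ha⟩, ?_⟩
  have hrows : LinearIndependent F (E.submatrix (e.toEmbedding.trans ⟨a, ha⟩) id).row :=
    hind.comp e e.injective
  exact ((isUnit_iff_isUnit_det _).1 (linearIndependent_rows_iff_isUnit.1 hrows)).ne_zero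

theorem Matrix.exists_map_det_submatrix_ne_zero {R F : Type*} [CommRing R] [Field F]
    [DecidableEq κ] (φ : R →+* F) (M : Matrix n κ R) (h : LinearIndependent F (M.map φ).col) :
    ∃ f : κ ↪ n, φ (M.submatrix f id).det ≠ 0 := by
  obtain ⟨f, hf⟩ := (M.map φ).exists_det_submatrix_ne_zero h
  exact ⟨f, by rwa [RingHom.map_det, RingHom.mapMatrix_apply, ← submatrix_map]⟩

theorem minorGcd_mul_s9 [DecidableEq n] [DecidableEq κ] (E : Matrix n κ ℤ) (Y : Matrix κ κ ℤ) :
    minorGcd (E * Y) = minorGcd E * Y.det.natAbs := by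
  have hminor (f : κ ↪ n) : ((E * Y).submatrix f id).det.natAbs =
      (E.submatrix f id).det.natAbs * Y.det.natAbs := by
    rw [← Int.natAbs_mul, ← det_mul, submatrix_mul _ _ _ id _ Function.bijective_id,
      submatrix_id_id]
  simp only [minorGcd, hminor, Finset.gcd_mul_right, normalize_eq]

theorem minorGcd_ne_zero [DecidableEq n] [DecidableEq κ] {c : κ → n → ℤ}
    (hc : LinearIndependent ℚ fun k i => (c k i : ℚ)) :
    minorGcd (Matrix.of fun r k => c k r) ≠ 0 := by
  obtain ⟨f, hf⟩ := (Matrix.of fun r k => c k r).exists_map_det_submatrix_ne_zero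
    (Int.castRingHom ℚ) hc
  rw [minorGcd, Ne, Finset.gcd_eq_zero_iff]
  exact fun h0 => hf (by simpa using h0 f (Finset.mem_univ f))

end Minors

section Saturation

variable {n κ : Type*}

theorem linearIndependent_intCast_iff_s9 (c : κ → n → ℤ) :
    LinearIndependent ℚ (fun k i => (c k i : ℚ)) ↔ LinearIndependent ℤ c := by
  rw [← LinearIndependent.iff_fractionRing ℤ ℚ]
  refine LinearMap.linearIndependent_iff ((Algebra.linearMap ℤ ℚ).compLeft n) ?_
  refine LinearMap.ker_eq_bot.2 fun p q hpq => funext fun i => ?_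
  simpa using congrFun hpq i

def intSaturation (c : κ → n → ℤ) : Submodule ℤ (n → ℤ) :=
  ((Submodule.span ℚ (Set.range fun k i => (c k i : ℚ))).restrictScalars ℤ).comap
    ((Algebra.linearMap ℤ ℚ).compLeft n)

theorem mem_intSaturation {c : κ → n → ℤ} {p : n → ℤ} :
    p ∈ intSaturation c ↔
      (fun i => (p i : ℚ)) ∈ Submodule.span ℚ (Set.range fun k i => (c k i : ℚ)) :=
  Iff.rfl

theorem closure_le_intSaturation (c : κ → n → ℤ) :
    AddSubgroup.closure (Set.range c) ≤ (intSaturation c).toAddSubgroup := by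
  rw [AddSubgroup.closure_le]
  rintro _ ⟨k, rfl⟩
  exact Submodule.subset_span ⟨k, rfl⟩

theorem mem_intSaturation_of_smul_mem {c : κ → n → ℤ} {q : ℤ} (hq : q ≠ 0) {y : n → ℤ}
    (h : q • y ∈ intSaturation c) : y ∈ intSaturation c := by
  rw [mem_intSaturation] at h ⊢
  have hy : (fun i => (y i : ℚ)) = (q : ℚ)⁻¹ • fun i => ((q • y) i : ℚ) := by
    ext i
    simp [hq]
  rw [hy]
  exact Submodule.smul_mem _ _ h

variable [Fintype κ]

theorem dvd_coeff_of_dvd_sum_basis {c : κ → n → ℤ} (b : Module.Basis κ ℤ (intSaturation c))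
    {q : ℤ} (hq : q ≠ 0) {z : κ → ℤ} (h : ∀ r, q ∣ ∑ k, z k * (b k : n → ℤ) r) (k : κ) :
    q ∣ z k := by
  choose y hy using h
  have hsum : q • y = ((b.equivFun.symm z : intSaturation c) : n → ℤ) := by
    ext r
    simp [Module.Basis.equivFun_symm_apply, Finset.sum_apply, hy r]
  have hymem : y ∈ intSaturation c :=
    mem_intSaturation_of_smul_mem hq (hsum ▸ (b.equivFun.symm z).2)
  have hz : q • b.equivFun ⟨y, hymem⟩ = z := by
    rw [← map_smul, ← b.equivFun.apply_symm_apply z]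
    exact congrArg b.equivFun (Subtype.ext hsum)
  exact ⟨_, (congrFun hz k).symm⟩

variable [Fintype n]

theorem finrank_intSaturation {c : κ → n → ℤ}
    (hc : LinearIndependent ℚ fun k i => (c k i : ℚ)) :
    Module.finrank ℤ (intSaturation c) = Fintype.card κ := by
  set S := intSaturation c
  set V := Submodule.span ℚ (Set.range fun k i => (c k i : ℚ))
  refine le_antisymm ?_ ?_
  · let b := Module.Free.chooseBasis ℤ S
    have hb : LinearIndependent ℚ fun j => (⟨fun i => ((b j : n → ℤ) i : ℚ), (b j).2⟩ : V) := by
      refine LinearIndependent.of_comp V.subtype ?_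
      refine (linearIndependent_intCast_iff_s9 fun j => (b j : n → ℤ)).2 ?_
      exact b.linearIndependent.map' S.subtype S.ker_subtype
    rw [Module.finrank_eq_card_chooseBasisIndex, ← finrank_span_eq_card hc]
    exact hb.fintype_card_le_finrank
  · have hcS : LinearIndependent ℤ fun k => (⟨c k, Submodule.subset_span ⟨k, rfl⟩⟩ : S) :=
      LinearIndependent.of_comp S.subtype ((linearIndependent_intCast_iff_s9 c).1 hc)
    exact hcS.fintype_card_le_finrank

theorem minorGcd_basis_intSaturation [DecidableEq n] [DecidableEq κ] {c : κ → n → ℤ}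
    (b : Module.Basis κ ℤ (intSaturation c)) :
    minorGcd (Matrix.of fun r k => (b k : n → ℤ) r) = 1 := by
  set E := Matrix.of fun r k => (b k : n → ℤ) r
  refine Nat.eq_one_iff_not_exists_prime_dvd.2 fun p hp hdvd => ?_
  have : Fact p.Prime := ⟨hp⟩
  have hind : LinearIndependent (ZMod p) (E.map (Int.castRingHom (ZMod p))).col := by
    refine Fintype.linearIndependent_iff.2 fun z hz k => ?_
    have hpz : (p : ℤ) ∣ ((z k).val : ℤ) := by
      refine dvd_coeff_of_dvd_sum_basis b (by exact_mod_cast hp.ne_zero)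
        (z := fun k => ((z k).val : ℤ)) (fun r => ?_) k
      rw [← ZMod.intCast_zmod_eq_zero_iff_dvd]
      simpa [E] using congrFun hz r
    rw [← ZMod.natCast_zmod_val (z k), ZMod.natCast_eq_zero_iff]
    exact_mod_cast hpz
  obtain ⟨f, hf⟩ := E.exists_map_det_submatrix_ne_zero _ hind
  apply hf
  rw [eq_intCast, ZMod.intCast_zmod_eq_zero_iff_dvd]
  exact Int.natCast_dvd.2 (hdvd.trans (Finset.gcd_dvd (Finset.mem_univ f)))

theorem relIndex_closure_intSaturation [DecidableEq n] [DecidableEq κ] {c : κ → n → ℤ}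
    (hc : LinearIndependent ℚ fun k i => (c k i : ℚ)) :
    (AddSubgroup.closure (Set.range c)).relIndex (intSaturation c).toAddSubgroup =
      minorGcd (Matrix.of fun r k => c k r) := by
  let bS : Module.Basis κ ℤ (intSaturation c) :=
    (Module.finBasisOfFinrankEq ℤ _ (finrank_intSaturation hc)).reindex (Fintype.equivFin κ).symm
  let bA : Module.Basis κ ℤ (AddSubgroup.closure (Set.range c)).toIntSubmodule :=
    (Module.Basis.span ((linearIndependent_intCast_iff_s9 c).1 hc)).map
      (LinearEquiv.ofEq _ _ (AddSubgroup.toIntSubmodule_closure _).symm)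
  have hbA (k : κ) : (bA k : n → ℤ) = c k := by simp [bA]
  have hfactor : Matrix.of (fun r k => c k r) = Matrix.of (fun r k => (bS k : n → ℤ) r) *
      bS.toMatrix fun k => ⟨bA k, closure_le_intSaturation c (bA k).2⟩ := by
    ext r k
    have hck := congrArg Subtype.val (bS.sum_repr ⟨bA k, closure_le_intSaturation c (bA k).2⟩)
    simp only [Submodule.coe_sum, Submodule.coe_smul] at hck
    rw [of_apply, ← hbA, ← hck]
    simp [Matrix.mul_apply, Module.Basis.toMatrix_apply, Finset.sum_apply, mul_comm]
  rw [AddSubgroup.relIndex_eq_natAbs_det _ _ (closure_le_intSaturation c) bA bS]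
  -- `erw`: the lemma sees `bS` through the `ℤ`-module structure `AddCommGroup.toIntModule`.
  erw [Module.Basis.det_apply bS]
  rw [hfactor, minorGcd_mul_s9, minorGcd_basis_intSaturation, one_mul]
  rfl

/-- Over `ℚ` the span of `Λ` is isotropic for `K` of half the dimension, hence equal to its own
`K`-orthogonal. -/
theorem sectorLattice_eq_intSaturation [DecidableEq n] {K : Matrix n n ℤ} (hK : K.det ≠ 0)
    {Λ : κ → n → ℤ} (hΛ : LinearIndependent ℚ fun k i => (Λ k i : ℚ))
    (hnull : ∀ k l, Λ k ⬝ᵥ (K *ᵥ Λ l) = 0)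
    (hcard : Fintype.card n = Fintype.card κ + Fintype.card κ) :
    sectorLattice K Λ = (intSaturation Λ).toAddSubgroup := by
  set Kq := K.map (Int.cast : ℤ → ℚ)
  set P : Matrix κ n ℚ := Matrix.of fun k i => (Λ k i : ℚ)
  set V := Submodule.span ℚ (Set.range fun k i => (Λ k i : ℚ))
  have hcast (p : n → ℤ) (k : κ) :
      ((Λ k ⬝ᵥ (K *ᵥ p) : ℤ) : ℚ) = ((P * Kq) *ᵥ fun i => (p i : ℚ)) k := by
    rw [← mulVec_mulVec]
    simp [P, Kq, dotProduct, mulVec]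
  have hKq : IsUnit Kq.det := by
    rw [isUnit_iff_ne_zero, show Kq = (Int.castRingHom ℚ).mapMatrix K from rfl,
      ← RingHom.map_det, eq_intCast]
    exact_mod_cast hK
  have hrank : (P * Kq).rank = Fintype.card κ := by
    rw [rank_mul_eq_left_of_isUnit_det _ _ hKq, rank_eq_finrank_span_row]
    exact finrank_span_eq_card hΛ
  have hV_le : V ≤ LinearMap.ker (P * Kq).mulVecLin := by
    rw [Submodule.span_le]
    rintro _ ⟨l, rfl⟩
    ext k
    simp [← hcast, hnull]
  have hker : LinearMap.ker (P * Kq).mulVecLin = V := by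
    refine (Submodule.eq_of_le_of_finrank_le hV_le ?_).symm
    have := LinearMap.finrank_range_add_finrank_ker (P * Kq).mulVecLin
    rw [← rank, hrank, Module.finrank_fintype_fun_eq_card, hcard] at this
    rw [finrank_span_eq_card hΛ]
    omega
  ext p
  change (∀ k, Λ k ⬝ᵥ (K *ᵥ p) = 0) ↔ (fun i => (p i : ℚ)) ∈ V
  rw [← hker, LinearMap.mem_ker, mulVecLin_apply, funext_iff]
  refine forall_congr' fun k => ?_
  rw [← hcast]
  simp

end Saturation

section Cylinder

variable {R m ι ι' : Type*} [CommRing R] [Fintype m] [DecidableEq m]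

theorem isUnit_det_fromBlocks_zero_one_one_neg (K : Matrix m m R) :
    IsUnit (fromBlocks 0 (1 : Matrix m m R) 1 (-K)).det := by
  refine isUnit_det_of_right_inverse (B := fromBlocks K (1 : Matrix m m R) 1 0) ?_
  rw [fromBlocks_multiply, ← fromBlocks_one]
  simp

def cylinderGappingVectors (K : Matrix m m R) (Λa : ι → m → R) (Λb : ι' → m → R) :
    ι ⊕ ι' → m ⊕ m → R :=
  Sum.elim (fun i => Sum.elim (K *ᵥ Λa i) (Λa i)) (fun j => Sum.elim 0 (Λb j))

theorem cylinderGappingVectors_null {K : Matrix m m R} (hK : K.IsSymm) {Λa : ι → m → R}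
    {Λb : ι' → m → R} (hnulla : ∀ i j, Λa i ⬝ᵥ (K *ᵥ Λa j) = 0)
    (hnullb : ∀ i j, Λb i ⬝ᵥ (K *ᵥ Λb j) = 0) (v w : ι ⊕ ι') :
    cylinderGappingVectors K Λa Λb v ⬝ᵥ
      (fromBlocks 0 1 1 (-K) *ᵥ cylinderGappingVectors K Λa Λb w) = 0 := by
  have hsym (x y : m → R) : (K *ᵥ x) ⬝ᵥ y = x ⬝ᵥ (K *ᵥ y) := by
    rw [dotProduct_mulVec, ← mulVec_transpose, hK.eq]
  rcases v with i | i <;> rcases w with j | j <;>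
    simp [cylinderGappingVectors, fromBlocks_mulVec, neg_mulVec, sumElim_dotProduct_sumElim, hsym,
      hnulla, hnullb]

theorem linearIndependent_cylinderGappingVectors [IsDomain R] [Fintype ι] [Fintype ι']
    {K : Matrix m m R} (hK : K.det ≠ 0) {Λa : ι → m → R} {Λb : ι' → m → R}
    (ha : LinearIndependent R Λa) (hb : LinearIndependent R Λb) :
    LinearIndependent R (cylinderGappingVectors K Λa Λb) := by
  refine Fintype.linearIndependent_iff.2 fun g hg => ?_
  have hK0 : K *ᵥ ∑ i, g (.inl i) • Λa i = 0 := by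
    funext r
    simpa [cylinderGappingVectors, Fintype.sum_sum_type, mulVec_sum, mulVec_smul]
      using congrFun hg (.inl r)
  have ha0 := Fintype.linearIndependent_iff.1 ha _ (eq_zero_of_mulVec_eq_zero hK hK0)
  have hb0 : ∑ j, g (.inr j) • Λb j = 0 := by
    funext r
    simpa [cylinderGappingVectors, Fintype.sum_sum_type, ha0] using congrFun hg (.inr r)
  rintro (i | j)
  exacts [ha0 i, Fintype.linearIndependent_iff.1 hb _ hb0 j]

end Cylinder

theorem cylinder_ground_state_degeneracy_general (N : ℕ)
    (K : Matrix (Fin (2 * N)) (Fin (2 * N)) ℤ) (hK : K.IsSymm) (hdet : K.det ≠ 0)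
    (Λa Λb : Fin N → Fin (2 * N) → ℤ)
    (hinda : LinearIndependent ℚ (fun i => fun j => (Λa i j : ℚ)))
    (hindb : LinearIndependent ℚ (fun i => fun j => (Λb i j : ℚ)))
    (hnulla : ∀ i j, Λa i ⬝ᵥ (K *ᵥ Λa j) = 0)
    (hnullb : ∀ i j, Λb i ⬝ᵥ (K *ᵥ Λb j) = 0) :
    let K' : Matrix (Fin (2 * N) ⊕ Fin (2 * N)) (Fin (2 * N) ⊕ Fin (2 * N)) ℤ :=
      Matrix.fromBlocks 0 1 1 (-K)
    let Λ' : Fin N ⊕ Fin N → Fin (2 * N) ⊕ Fin (2 * N) → ℤ :=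
      Sum.elim (fun i => Sum.elim (K *ᵥ Λa i) (Λa i)) (fun j => Sum.elim 0 (Λb j))
    AddSubgroup.closure (Set.range Λ') ≤ sectorLattice K' Λ' ∧
    (AddSubgroup.closure (Set.range Λ')).relIndex (sectorLattice K' Λ') ≠ 0 ∧
    (AddSubgroup.closure (Set.range Λ')).relIndex (sectorLattice K' Λ') =
      minorGcd (Matrix.of fun r c => Λ' c r) := by
  intro K' Λ'
  have hΛ' : LinearIndependent ℚ fun v r => (Λ' v r : ℚ) :=
    (linearIndependent_intCast_iff_s9 Λ').2 <| linearIndependent_cylinderGappingVectors hdet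
      ((linearIndependent_intCast_iff_s9 Λa).1 hinda) ((linearIndependent_intCast_iff_s9 Λb).1 hindb)
  have hsector : sectorLattice K' Λ' = (intSaturation Λ').toAddSubgroup :=
    sectorLattice_eq_intSaturation (isUnit_det_fromBlocks_zero_one_one_neg K).ne_zero hΛ'
      (cylinderGappingVectors_null hK hnulla hnullb)
      (by simp only [Fintype.card_sum, Fintype.card_fin]; ring)
  rw [hsector, relIndex_closure_intSaturation hΛ']
  exact ⟨closure_le_intSaturation Λ', minorGcd_ne_zero hΛ', rfl⟩

/-- (Ground state degeneracy on a cylinder.)  With `K` symmetric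
nonsingular and two null-vector families `Λ_{a,i}`, `Λ_{b,i}` gapping the two edges, set
`K' = [[0, I], [I, -K]]`, `Λ'ᵢ = (K Λ_{a,i}, Λ_{a,i})`, `Λ'_{N+j} = (0, Λ_{b,j})`,
`Γ' = {p ∈ ℤ^{4N} : Λ'ᵢᵀ K' p = 0 ∀ i}` and `A'` the subgroup generated by the `Λ'ᵢ`.
Then `A' ⊆ Γ'` and the index `[Γ' : A']` is finite and equals the gcd of the absolute
values of the `2N × 2N` minors of the matrix `M'` with columns the `Λ'ᵢ`. -/
theorem cylinder_ground_state_degeneracy (N : ℕ) (hN : 1 ≤ N)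
    (K : Matrix (Fin (2 * N)) (Fin (2 * N)) ℤ) (hK : K.IsSymm) (hdet : K.det ≠ 0)
    (Λa Λb : Fin N → Fin (2 * N) → ℤ)
    (hinda : LinearIndependent ℚ (fun i => fun j => (Λa i j : ℚ)))
    (hindb : LinearIndependent ℚ (fun i => fun j => (Λb i j : ℚ)))
    (hnulla : ∀ i j, Λa i ⬝ᵥ (K *ᵥ Λa j) = 0)
    (hnullb : ∀ i j, Λb i ⬝ᵥ (K *ᵥ Λb j) = 0) :
    let K' : Matrix (Fin (2 * N) ⊕ Fin (2 * N)) (Fin (2 * N) ⊕ Fin (2 * N)) ℤ :=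
      Matrix.fromBlocks 0 1 1 (-K)
    let Λ' : Fin N ⊕ Fin N → Fin (2 * N) ⊕ Fin (2 * N) → ℤ :=
      Sum.elim (fun i => Sum.elim (K *ᵥ Λa i) (Λa i)) (fun j => Sum.elim 0 (Λb j))
    AddSubgroup.closure (Set.range Λ') ≤ sectorLattice K' Λ' ∧
    (AddSubgroup.closure (Set.range Λ')).relIndex (sectorLattice K' Λ') ≠ 0 ∧
    (AddSubgroup.closure (Set.range Λ')).relIndex (sectorLattice K' Λ') =
      minorGcd (Matrix.of fun r c => Λ' c r) :=
  cylinder_ground_state_degeneracy_general N K hK hdet Λa Λb hinda hindb hnulla hnullb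
end

section
/- Let A be an invertible 4×4 complex matrix and B a 4×4 complex matrix satisfying A·B = i·(B·A). Then the characteristic polynomial of B equals X⁴ + det(B); equivalently, there is λ ∈ ℂ with det B = −λ⁴ such that the eigenvalues of B, counted with multiplicity, are λ, iλ, −λ, −iλ. -/
/-!
Conjugation by `A` carries `B` to `i • B`, so `B` and `i • B` share the characteristic
polynomial `p`. As `det (i x - i B) = i⁴ det (x - B)`, this means `p (i x) = p x`, so the
coefficient of `X ^ k` vanishes unless `i ^ k = 1`; for the monic quartic `p` only `X ^ 4` and
the constant term `det B` survive.
-/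

open Matrix Polynomial

namespace Matrix

variable {n R : Type*} [Fintype n] [DecidableEq n] [CommRing R]

theorem charmatrix_smul_map_comp (c : R) (M : Matrix n n R) :
    (charmatrix (c • M)).map (fun p => p.comp (C c * X)) = C c • charmatrix M := by
  ext i j : 1
  by_cases hij : i = j
  · subst hij
    simp [charmatrix_apply_eq, mul_sub, C_mul]
  · simp [charmatrix_apply_ne _ _ _ hij]

theorem charpoly_smul_comp_C_mul_X (c : R) (M : Matrix n n R) :
    (c • M).charpoly.comp (C c * X) = C c ^ Fintype.card n * M.charpoly := by
  rw [charpoly, ← coe_compRingHom_apply, RingHom.map_det, RingHom.mapMatrix_apply,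
    coe_compRingHom, charmatrix_smul_map_comp, det_smul, charpoly]

theorem charpoly_smul_of_mul_eq_smul_mul {A B : Matrix n n R} (hA : IsUnit A.det) {c : R}
    (h : A * B = c • (B * A)) : (c • B).charpoly = B.charpoly := by
  have hconj : c • B = A * (B * A⁻¹) := by
    rw [← Matrix.mul_assoc, h, smul_mul, Matrix.mul_assoc, mul_nonsing_inv _ hA, Matrix.mul_one]
  rw [hconj, charpoly_mul_comm, Matrix.mul_assoc, nonsing_inv_mul _ hA, Matrix.mul_one]

end Matrix

theorem Polynomial.coeff_eq_zero_of_comp_C_mul_X_eq {R : Type*} [CommSemiring R]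
    [IsLeftCancelMulZero R] {p : R[X]} {ζ : R} (hp : p.comp (C ζ * X) = p) {k : ℕ} (hk : ζ ^ k ≠ 1) : p.coeff k = 0 := by
  have := congrArg (coeff · k) hp
  simp only [comp_C_mul_X_coeff] at this
  exact (mul_right_eq_self₀.mp this).resolve_left hk

/-- If `A` is an invertible `4 × 4` complex matrix and `B` satisfies
`A B = i · (B A)`, then the characteristic polynomial of `B` is `X⁴ + det B` (so the
eigenvalues of `B` are `λ, iλ, -λ, -iλ` with `det B = -λ⁴`). -/
theorem charpoly_of_clock_shift (A B : Matrix (Fin 4) (Fin 4) ℂ) (hA : IsUnit A.det)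
    (h : A * B = Complex.I • (B * A)) :
    B.charpoly = X ^ 4 + C B.det := by
  have hinv : B.charpoly.comp (C Complex.I * X) = B.charpoly := by
    simpa [charpoly_smul_of_mul_eq_smul_mul hA h, ← C_pow, Complex.I_pow_four] using
      B.charpoly_smul_comp_C_mul_X Complex.I
  have hcoeff (k : ℕ) (hk₀ : k ≠ 0) (hk₄ : k < 4) : B.charpoly.coeff k = 0 :=
    coeff_eq_zero_of_comp_C_mul_X_eq hinv
      (Complex.isPrimitiveRoot_I.pow_ne_one_of_pos_of_lt hk₀ hk₄)
  have hdeg : B.charpoly.natDegree = 4 := by simp [charpoly_natDegree_eq_dim]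
  have hdet : B.charpoly.coeff 0 = B.det := by norm_num [det_eq_sign_charpoly_coeff]
  rw [B.charpoly_monic.as_sum, hdeg]
  simp [Finset.sum_range_succ, hdet, hcoeff]
end

section
/- Let 𝒦 be the 4×4 integer matrix with rows (0,2,1,1), (2,0,3,−3), (1,3,1,0), (1,−3,0,−1), let τ = (0,4,1,1) and χ = (0,0,0,1). Then 𝒦 is invertible over ℚ, the additive subgroup {lᵀ𝒦⁻¹τ : l ∈ ℤ⁴} of ℚ equals (1/2)·ℤ, and χᵀ𝒦⁻¹τ = −1/2; in particular (1/e*) = 2 is even while (1/e*)·χᵀ𝒦⁻¹τ = −1 is odd. -/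
/-!
The inverse of `𝒦` is explicit, with entries in `¼ℤ`, and `𝒦⁻¹τ = (1, 0, 1, -1)/2`. Since one
numerator is `1`, the integer combinations of these entries are exactly `½ℤ`, while `χ` reads off
the last entry `-1/2`.
-/

open Matrix

theorem setOf_intVec_dotProduct_div_eq {ι : Type*} [Fintype ι] [DecidableEq ι]
    (m : ι → ℤ) (d : ℚ) (i₀ : ι) (hm : m i₀ = 1) :
    {x : ℚ | ∃ l : ι → ℤ, x = (fun i => (l i : ℚ)) ⬝ᵥ (fun i => (m i : ℚ) / d)} =
      {x : ℚ | ∃ n : ℤ, x = (n : ℚ) / d} := by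
  ext x
  constructor
  · rintro ⟨l, rfl⟩
    refine ⟨∑ i, l i * m i, ?_⟩
    simp only [dotProduct, Int.cast_sum, Int.cast_mul, Finset.sum_div, mul_div_assoc]
  · rintro ⟨n, rfl⟩
    refine ⟨Pi.single i₀ n, ?_⟩
    simp [dotProduct, Pi.single_apply, hm, div_eq_mul_inv]

def kMatrix : Matrix (Fin 4) (Fin 4) ℚ :=
  !![0, 2, 1, 1; 2, 0, 3, -3; 1, 3, 1, 0; 1, -3, 0, -1]

def kMatrixInv : Matrix (Fin 4) (Fin 4) ℚ :=
  !![0, -1/4, 3/4, 3/4; -1/4, 0, 1/4, -1/4; 3/4, 1/4, -1/2, 0; 3/4, -1/4, 0, 1/2]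

theorem kMatrix_mul_kMatrixInv : kMatrix * kMatrixInv = 1 := by
  ext i j
  fin_cases i <;> fin_cases j <;>
    simp [kMatrix, kMatrixInv, mul_apply, Fin.sum_univ_four, one_apply] <;> norm_num

theorem kMatrix_inv_mulVec_charge :
    kMatrix⁻¹ *ᵥ ![0, 4, 1, 1] = fun i => ((![1, 0, 1, -1] : Fin 4 → ℤ) i : ℚ) / 2 := by
  rw [inv_eq_right_inv kMatrix_mul_kMatrixInv]
  ext i
  fin_cases i <;> simp [kMatrixInv, mulVec, dotProduct, Fin.sum_univ_four] <;> norm_num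

/-- (Counterexample beyond Abelian spin Hall insulators.)  For the `4×4`
integer K-matrix `𝒦` with rows `(0,2,1,1), (2,0,3,-3), (1,3,1,0), (1,-3,0,-1)`, charge
vector `τ = (0,4,1,1)` and time-reversal vector `χ = (0,0,0,1)`, the matrix `𝒦` is
invertible over `ℚ`, the additive subgroup `{lᵀ 𝒦⁻¹ τ : l ∈ ℤ⁴}` of `ℚ` equals `(1/2)·ℤ`,
and `χᵀ 𝒦⁻¹ τ = -1/2`; in particular, `1/e* = 2` is even while
`(1/e*) · χᵀ 𝒦⁻¹ τ = -1` is odd. -/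
theorem counterexample_general_abelian_insulator :
    let 𝒦 : Matrix (Fin 4) (Fin 4) ℚ :=
      !![0, 2, 1, 1; 2, 0, 3, -3; 1, 3, 1, 0; 1, -3, 0, -1]
    let τ : Fin 4 → ℚ := ![0, 4, 1, 1]
    let χ : Fin 4 → ℚ := ![0, 0, 0, 1]
    IsUnit 𝒦.det ∧
    {x : ℚ | ∃ l : Fin 4 → ℤ, x = (fun i => (l i : ℚ)) ⬝ᵥ (𝒦⁻¹ *ᵥ τ)} =
      {x : ℚ | ∃ n : ℤ, x = (n : ℚ) / 2} ∧
    χ ⬝ᵥ (𝒦⁻¹ *ᵥ τ) = -1 / 2 ∧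
    (2 : ℚ) * (χ ⬝ᵥ (𝒦⁻¹ *ᵥ τ)) = -1 := by
  intro 𝒦 τ χ
  have hv : 𝒦⁻¹ *ᵥ τ = fun i => ((![1, 0, 1, -1] : Fin 4 → ℤ) i : ℚ) / 2 :=
    kMatrix_inv_mulVec_charge
  have hχ : χ ⬝ᵥ (𝒦⁻¹ *ᵥ τ) = -1 / 2 := by
    simp [hv, χ, dotProduct, Fin.sum_univ_four]
  refine ⟨isUnit_det_of_right_inverse kMatrix_mul_kMatrixInv, ?_, hχ, ?_⟩
  · rw [hv]
    exact setOf_intVec_dotProduct_div_eq _ 2 0 rfl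
  · rw [hχ]
    norm_num
end
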